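/- arXiv:2304.04379 — 3 statements merged into one kernel-verified Lean document; each statement's English description precedes it below -/
import Mathlib

section
/- Let n ≥ 4 and let M_{2ⁿ} be the group of order 2ⁿ realized as the semidirect product (ZMod 2^{n−1}) ⋊ (ZMod 2) in which the nontrivial element of ZMod 2 acts on ZMod 2^{n−1} by multiplication by 2^{n−2} + 1; write X = (1,0) and Y = (0,1). Let a : M_{2ⁿ} → ℤ, write a_j := a(X^j) and b_j := a(Y·X^j) for 0 ≤ j ≤ 2^{n−1} − 1, and define f(z) = Σ_j a_j z^j and g(z) = Σ_j b_j z^j for z ∈ ℂ. Then, with λ_j = exp(2πi·j/2^{n−1}), the integer group determinant satisfies (D_{M_{2ⁿ}}(a) : ℂ) = ∏_{j=0}^{2^{n−1}−1} ( f(λ_j)·f(λ_j^{2^{n−2}+1}) − g(λ_j)·g(λ_j^{2^{n−2}+1}) ). -/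
open SemidirectProduct

instance sdpFintype {N H : Type*} [Group N] [Group H] {φ : H →* MulAut N}
    [Fintype N] [Fintype H] : Fintype (N ⋊[φ] H) :=
  Fintype.ofEquiv (N × H)
    ⟨fun p => ⟨p.1, p.2⟩, fun g => (g.left, g.right), fun _ => rfl, fun _ => rfl⟩

instance sdpDecEq {N H : Type*} [Group N] [Group H] {φ : H →* MulAut N}
    [DecidableEq N] [DecidableEq H] : DecidableEq (N ⋊[φ] H) := fun a b =>
  decidable_of_iff (a.left = b.left ∧ a.right = b.right)
    (by cases a; cases b; simp [SemidirectProduct.ext_iff])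

/-- The integer group determinant of `a : G → ℤ`. -/
def groupDet {G : Type*} [Group G] [Fintype G] [DecidableEq G] (a : G → ℤ) : ℤ :=
  Matrix.det (Matrix.of fun g h : G => a (g * h⁻¹))

/-- The additive automorphism of `ZMod m` given by multiplication by a self-inverse
element `c`, viewed as a multiplicative automorphism of `Multiplicative (ZMod m)`. -/
def mulBy {m : ℕ} (c : ZMod m) (hc : c * c = 1) :
    MulAut (Multiplicative (ZMod m)) where
  toFun x := Multiplicative.ofAdd (c * x.toAdd)
  invFun x := Multiplicative.ofAdd (c * x.toAdd)
  left_inv x := by simp [← mul_assoc, hc]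
  right_inv x := by simp [← mul_assoc, hc]
  map_mul' x y := by simp [mul_add]

lemma mulBy_sq {m : ℕ} (c : ZMod m) (hc : c * c = 1) : (mulBy c hc) ^ 2 = 1 := by
  ext x
  rw [sq]
  show (mulBy c hc) ((mulBy c hc) x) = x
  simp [mulBy, ← mul_assoc, hc]

/-- The homomorphism from `Multiplicative (ZMod 2)` sending the nontrivial element to a
given element of order dividing 2. -/
def homOfOrderTwo {G : Type*} [Group G] (g : G) (hg : g ^ 2 = 1) :
    Multiplicative (ZMod 2) →* G :=
  MonoidHom.mk' (fun x => g ^ (Multiplicative.toAdd x).val) (by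
    intro a b
    show g ^ (Multiplicative.toAdd (a * b)).val =
      g ^ (Multiplicative.toAdd a).val * g ^ (Multiplicative.toAdd b).val
    have h : Multiplicative.toAdd (a * b) = Multiplicative.toAdd a + Multiplicative.toAdd b := rfl
    rw [← pow_add, h, ZMod.val_add, ← pow_eq_pow_mod _ hg])

lemma pow_pred_eq_zero (n : ℕ) (hn : 4 ≤ n) :
    (2 : ZMod (2 ^ (n - 1))) ^ (n - 1) = 0 := by
  have := ZMod.natCast_self (2 ^ (n - 1))
  push_cast at this
  exact this

lemma key_sq (n : ℕ) (hn : 4 ≤ n) :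
    (2 : ZMod (2 ^ (n - 1))) ^ (n - 2) * 2 ^ (n - 2) = 0 := by
  have h : (n - 2) + (n - 2) = (n - 1) + (n - 3) := by omega
  rw [← pow_add, h, pow_add, pow_pred_eq_zero n hn, zero_mul]

lemma key_two (n : ℕ) (hn : 4 ≤ n) :
    (2 : ZMod (2 ^ (n - 1))) ^ (n - 2) + 2 ^ (n - 2) = 0 := by
  have h : (n - 2) + 1 = n - 1 := by omega
  rw [← two_mul, ← pow_succ', h, pow_pred_eq_zero n hn]

/-- The element `2 ^ (n - 2) + 1` of `ZMod (2 ^ (n - 1))`. -/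
def mc (n : ℕ) : ZMod (2 ^ (n - 1)) := 2 ^ (n - 2) + 1

lemma mc_sq (n : ℕ) (hn : 4 ≤ n) : mc n * mc n = 1 := by
  unfold mc
  linear_combination key_sq n hn + key_two n hn

/-- The modular maximal-cyclic group of order `2 ^ n`, realized as
`(ZMod 2 ^ (n - 1)) ⋊ (ZMod 2)` with the nontrivial element of `ZMod 2` acting by
multiplication by `2 ^ (n - 2) + 1`. -/
abbrev Mpow (n : ℕ) (hn : 4 ≤ n) : Type :=
  Multiplicative (ZMod (2 ^ (n - 1))) ⋊[homOfOrderTwo (mulBy (mc n) (mc_sq n hn))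
    (mulBy_sq _ _)] Multiplicative (ZMod 2)

/-- The generator `X` of order `2 ^ (n - 1)`. -/
def Mpow.X (n : ℕ) (hn : 4 ≤ n) : Mpow n hn := inl (Multiplicative.ofAdd 1)

/-- The generator `Y` of order `2`. -/
def Mpow.Y (n : ℕ) (hn : 4 ≤ n) : Mpow n hn := inr (Multiplicative.ofAdd 1)

/-!
The argument works for any `ZMod m ⋊ ZMod 2` in which `Y` acts by an involution `x ↦ c * x`.
Listing the group as `X ^ x, Y * X ^ x` (`x : ZMod m`), the group matrix becomes a `2 × 2` block
matrix of circulants with entries `α (x - y)`, `β (c * (x - y))`, `β (x - y)`, `α (c * (x - y))`,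
where `α u = a (X ^ u)` and `β u = a (Y * X ^ u)`. One Fourier matrix diagonalises all four
blocks, the eigenvalue of `circulant v` at `t` being `∑ u, v u * ψ (u * t)`, so the determinant
is a product over `t` of `2 × 2` determinants. Since `u ↦ c * u` is an involution, the eigenvalue
of `v (c * ·)` at `t` is that of `v` at `c * t`; for `ψ t = λ_t` the eigenvalues of the blocks
are `f` and `g` at `λ_t` and at `λ_t ^ c`.
-/

open Matrix Multiplicative

lemma det_fromBlocks_diagonal {ι R : Type*} [Fintype ι] [DecidableEq ι] [CommRing R]
    (d₁ d₂ d₃ d₄ : ι → R) :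
    (fromBlocks (diagonal d₁) (diagonal d₂) (diagonal d₃) (diagonal d₄)).det =
      ∏ i, (d₁ i * d₄ i - d₂ i * d₃ i) := by
  let e : ι ⊕ ι ≃ Fin 2 × ι :=
    (Equiv.boolProdEquivSum ι).symm.trans (finTwoEquiv.symm.prodCongr (Equiv.refl ι))
  have : fromBlocks (diagonal d₁) (diagonal d₂) (diagonal d₃) (diagonal d₄) =
      (blockDiagonal fun i => !![d₁ i, d₂ i; d₃ i, d₄ i]).submatrix e e := by
    ext (x | x) (y | y) <;> by_cases h : x = y <;> simp [e, h, blockDiagonal_apply, finTwoEquiv]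
  rw [this, det_submatrix_equiv_self, det_blockDiagonal]
  simp_rw [det_fin_two_of]

@[to_additive]
lemma ZMod.prod_eq_prod_range {M : Type*} [CommMonoid M] (m : ℕ) [NeZero m] (f : ZMod m → M) :
    ∏ u : ZMod m, f u = ∏ k ∈ Finset.range m, f k :=
  Finset.prod_bij' (fun u _ => u.val) (fun k _ => (k : ZMod m))
    (fun u _ => Finset.mem_range.2 u.val_lt) (fun _ _ => Finset.mem_univ _)
    (fun u _ => ZMod.natCast_zmod_val u)
    (fun _ hk => ZMod.val_cast_of_lt (Finset.mem_range.1 hk))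
    (fun u _ => by rw [ZMod.natCast_zmod_val])

lemma ZMod.stdAddChar_natCast (N k : ℕ) [NeZero N] :
    ZMod.stdAddChar (k : ZMod N) = Complex.exp (2 * Real.pi * Complex.I * k / N) := by
  simpa using ZMod.stdAddChar_coe (N := N) k

section Fourier

variable {m : ℕ} [NeZero m] {K : Type*} [CommRing K] (ψ : AddChar (ZMod m) K)

def fourierMatrix : Matrix (ZMod m) (ZMod m) K := of fun x t => ψ (-(x * t))

def circulantSymbol (v : ZMod m → K) (t : ZMod m) : K := ∑ u, v u * ψ (u * t)

variable {ψ}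

lemma circulant_mul_fourierMatrix (v : ZMod m → K) :
    circulant v * fourierMatrix ψ = fourierMatrix ψ * diagonal (circulantSymbol ψ v) := by
  ext x t
  rw [mul_diagonal, mul_apply, circulantSymbol, Finset.mul_sum]
  refine Fintype.sum_equiv (Equiv.subLeft x) _ _ fun y => ?_
  simp only [circulant_apply, fourierMatrix, of_apply, Equiv.subLeft_apply]
  rw [show -(y * t) = -(x * t) + (x - y) * t by ring, AddChar.map_add_eq_mul]
  ring

lemma circulantSymbol_comp_mul {c : ZMod m} (hc : c * c = 1) (v : ZMod m → K) (t : ZMod m) :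
    circulantSymbol ψ (fun u => v (c * u)) t = circulantSymbol ψ v (c * t) := by
  have hinv : Function.Involutive (c * ·) := fun u => by
    simp only [← mul_assoc, hc, one_mul]
  refine Fintype.sum_equiv hinv.toPerm _ _ fun u => ?_
  simp only [Function.Involutive.coe_toPerm]
  rw [show c * u * (c * t) = u * t by linear_combination u * t * hc]

lemma circulantSymbol_eq_sum_range (v : ZMod m → K) (t : ZMod m) :
    circulantSymbol ψ v t = ∑ j ∈ Finset.range m, v j * ψ t ^ j := by
  rw [circulantSymbol, ZMod.sum_eq_sum_range]
  simp_rw [← AddChar.map_nsmul_eq_pow, nsmul_eq_mul]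

variable [IsDomain K]

lemma det_fourierMatrix_ne_zero (hψ : ψ.IsPrimitive) (hm : (m : K) ≠ 0) :
    (fourierMatrix ψ).det ≠ 0 := by
  have hinv : fourierMatrix ψ * of (fun t y => ψ (t * y)) = (m : K) • 1 := by
    ext x y
    have orthogonality := AddChar.sum_mulShift (y - x) hψ
    simp only [ZMod.card, sub_eq_zero] at orthogonality
    simp only [mul_apply, fourierMatrix, of_apply, Matrix.smul_apply, one_apply,
      ← AddChar.map_add_eq_mul]
    convert orthogonality using 2 with t
    · ring_nf
    · by_cases h : x = y <;> simp [h, Ne.symm]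
  have h := congrArg det hinv
  rw [det_mul, det_smul, det_one, mul_one, ZMod.card] at h
  exact left_ne_zero_of_mul (h ▸ pow_ne_zero m hm)

lemma det_fromBlocks_circulant (hψ : ψ.IsPrimitive) (hm : (m : K) ≠ 0)
    (v₁ v₂ v₃ v₄ : ZMod m → K) :
    (fromBlocks (circulant v₁) (circulant v₂) (circulant v₃) (circulant v₄)).det =
      ∏ t, (circulantSymbol ψ v₁ t * circulantSymbol ψ v₄ t -
        circulantSymbol ψ v₂ t * circulantSymbol ψ v₃ t) := by
  set F := fromBlocks (fourierMatrix ψ) 0 0 (fourierMatrix ψ)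
  have hF : F.det ≠ 0 := by
    rw [det_fromBlocks_zero₂₁]
    exact mul_ne_zero (det_fourierMatrix_ne_zero hψ hm) (det_fourierMatrix_ne_zero hψ hm)
  have hdiag : fromBlocks (circulant v₁) (circulant v₂) (circulant v₃) (circulant v₄) * F =
      F * fromBlocks (diagonal (circulantSymbol ψ v₁)) (diagonal (circulantSymbol ψ v₂))
        (diagonal (circulantSymbol ψ v₃)) (diagonal (circulantSymbol ψ v₄)) := by
    simp only [F, fromBlocks_multiply, circulant_mul_fourierMatrix, mul_zero, zero_mul,
      add_zero, zero_add]
  have h := congrArg det hdiag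
  rw [det_mul, det_mul, mul_comm, det_fromBlocks_diagonal] at h
  exact mul_left_cancel₀ hF h

end Fourier

lemma homOfOrderTwo_ofAdd_one {G : Type*} [Group G] (g : G) (hg : g ^ 2 = 1) :
    homOfOrderTwo g hg (ofAdd 1) = g :=
  pow_one g

lemma mulBy_apply {m : ℕ} (c : ZMod m) (hc : c * c = 1) (x : Multiplicative (ZMod m)) :
    mulBy c hc x = ofAdd (c * x.toAdd) :=
  rfl

/-- `⟨X, Y | X ^ m = Y ^ 2 = 1, Y * X * Y = X ^ c⟩`, with `X ^ x = inl (ofAdd x)` and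
`Y = inr (ofAdd 1)`. -/
abbrev ZModSemidirectTwo {m : ℕ} (c : ZMod m) (hc : c * c = 1) : Type :=
  Multiplicative (ZMod m) ⋊[homOfOrderTwo (mulBy c hc) (mulBy_sq c hc)] Multiplicative (ZMod 2)

namespace ZModSemidirectTwo

variable {m : ℕ} {c : ZMod m} {hc : c * c = 1}

lemma inl_mul_inr_one (x : ZMod m) :
    (inl (ofAdd x) * inr (ofAdd 1) : ZModSemidirectTwo c hc) =
      inr (ofAdd 1) * inl (ofAdd (c * x)) := by
  ext
  · simp [homOfOrderTwo_ofAdd_one, mulBy_apply, ← mul_assoc, hc]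
  · simp

lemma inr_one_mul_inr_one : (inr (ofAdd 1) * inr (ofAdd 1) : ZModSemidirectTwo c hc) = 1 := by
  rw [← map_mul, ← ofAdd_add]
  rfl

lemma inv_inr_one : (inr (ofAdd 1))⁻¹ = (inr (ofAdd 1) : ZModSemidirectTwo c hc) :=
  inv_eq_of_mul_eq_one_right inr_one_mul_inr_one

lemma inl_mul_inv_inl (x y : ZMod m) :
    (inl (ofAdd x) * (inl (ofAdd y))⁻¹ : ZModSemidirectTwo c hc) = inl (ofAdd (x - y)) := by
  rw [← map_inv, ← map_mul, sub_eq_add_neg, ofAdd_add, ofAdd_neg]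

lemma inl_mul_inv_inr_one_mul_inl (x y : ZMod m) :
    (inl (ofAdd x) * (inr (ofAdd 1) * inl (ofAdd y))⁻¹ : ZModSemidirectTwo c hc) =
      inr (ofAdd 1) * inl (ofAdd (c * (x - y))) := by
  rw [_root_.mul_inv_rev, inv_inr_one, ← mul_assoc, inl_mul_inv_inl, inl_mul_inr_one]

lemma inr_one_mul_inl_mul_inv_inl (x y : ZMod m) :
    (inr (ofAdd 1) * inl (ofAdd x) * (inl (ofAdd y))⁻¹ : ZModSemidirectTwo c hc) =
      inr (ofAdd 1) * inl (ofAdd (x - y)) := by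
  rw [mul_assoc, inl_mul_inv_inl]

lemma inr_one_mul_inl_mul_inv_inr_one_mul_inl (x y : ZMod m) :
    (inr (ofAdd 1) * inl (ofAdd x) * (inr (ofAdd 1) * inl (ofAdd y))⁻¹ :
      ZModSemidirectTwo c hc) = inl (ofAdd (c * (x - y))) := by
  rw [mul_assoc, inl_mul_inv_inr_one_mul_inl, ← mul_assoc, inr_one_mul_inr_one, one_mul]

lemma bijective_sumElim :
    Function.Bijective (Sum.elim (fun x => inl (ofAdd x))
      (fun x => inr (ofAdd 1) * inl (ofAdd x)) : ZMod m ⊕ ZMod m → ZModSemidirectTwo c hc) := by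
  have h1 : (ofAdd 1 : Multiplicative (ZMod 2)) ≠ 1 := by decide
  constructor
  · rintro (x | x) (y | y) h <;> simp_all [SemidirectProduct.ext_iff, h1.symm]
  · intro g
    rw [← inl_left_mul_inr_right g]
    generalize g.left = l, g.right = r
    obtain rfl | rfl : r = 1 ∨ r = ofAdd 1 := by decide +revert
    · exact ⟨Sum.inl l.toAdd, by simp⟩
    · refine ⟨Sum.inr (c * l.toAdd), ?_⟩
      rw [← ofAdd_toAdd l, inl_mul_inr_one]
      rfl

noncomputable def sumEquiv : ZMod m ⊕ ZMod m ≃ ZModSemidirectTwo c hc :=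
  Equiv.ofBijective _ bijective_sumElim

lemma groupMatrix_submatrix_sumEquiv {K : Type*} (a : ZModSemidirectTwo c hc → K) :
    (of fun g h => a (g * h⁻¹)).submatrix sumEquiv sumEquiv =
      fromBlocks (circulant fun u => a (inl (ofAdd u)))
        (circulant fun u => a (inr (ofAdd 1) * inl (ofAdd (c * u))))
        (circulant fun u => a (inr (ofAdd 1) * inl (ofAdd u)))
        (circulant fun u => a (inl (ofAdd (c * u)))) := by
  ext (x | x) (y | y) <;>
    simp only [submatrix_apply, of_apply, sumEquiv, Equiv.ofBijective_apply, Sum.elim_inl,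
      Sum.elim_inr, fromBlocks_apply₁₁, fromBlocks_apply₁₂, fromBlocks_apply₂₁, fromBlocks_apply₂₂,
      circulant_apply, inl_mul_inv_inl, inl_mul_inv_inr_one_mul_inl, inr_one_mul_inl_mul_inv_inl,
      inr_one_mul_inl_mul_inv_inr_one_mul_inl]

theorem det_groupMatrix [NeZero m] {K : Type*} [CommRing K] [IsDomain K]
    {ψ : AddChar (ZMod m) K} (hψ : ψ.IsPrimitive) (hm : (m : K) ≠ 0)
    (a : ZModSemidirectTwo c hc → K) :
    (of fun g h => a (g * h⁻¹)).det =
      ∏ t, (circulantSymbol ψ (fun u => a (inl (ofAdd u))) t *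
          circulantSymbol ψ (fun u => a (inl (ofAdd u))) (c * t) -
        circulantSymbol ψ (fun u => a (inr (ofAdd 1) * inl (ofAdd u))) t *
          circulantSymbol ψ (fun u => a (inr (ofAdd 1) * inl (ofAdd u))) (c * t)) := by
  rw [← det_submatrix_equiv_self sumEquiv, groupMatrix_submatrix_sumEquiv,
    det_fromBlocks_circulant hψ hm]
  simp only [← circulantSymbol_comp_mul hc]
  exact Finset.prod_congr rfl fun t _ => by ring

end ZModSemidirectTwo

lemma Mpow.X_pow (n : ℕ) (hn : 4 ≤ n) (j : ℕ) :
    Mpow.X n hn ^ j = inl (ofAdd (j : ZMod (2 ^ (n - 1)))) := by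
  rw [Mpow.X, ← map_pow, ← ofAdd_nsmul, nsmul_one]

/-- factorization of the group determinant of `M_{2^n}` over the
`2 ^ (n-1)`st roots of unity. -/
theorem mpow_det_formula (n : ℕ) (hn : 4 ≤ n) (a : Mpow n hn → ℤ) (f g : ℂ → ℂ)
    (hf : ∀ z : ℂ, f z = ∑ j ∈ Finset.range (2 ^ (n - 1)),
      (a (Mpow.X n hn ^ j) : ℂ) * z ^ j)
    (hg : ∀ z : ℂ, g z = ∑ j ∈ Finset.range (2 ^ (n - 1)),
      (a (Mpow.Y n hn * Mpow.X n hn ^ j) : ℂ) * z ^ j) :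
    ((groupDet a : ℤ) : ℂ) =
      ∏ j ∈ Finset.range (2 ^ (n - 1)),
        (f (Complex.exp (2 * Real.pi * Complex.I * j / (2 : ℂ) ^ (n - 1))) *
            f (Complex.exp (2 * Real.pi * Complex.I * j / (2 : ℂ) ^ (n - 1)) ^
              (2 ^ (n - 2) + 1 : ℕ)) -
          g (Complex.exp (2 * Real.pi * Complex.I * j / (2 : ℂ) ^ (n - 1))) *
            g (Complex.exp (2 * Real.pi * Complex.I * j / (2 : ℂ) ^ (n - 1)) ^
              (2 ^ (n - 2) + 1 : ℕ))) := by
  have hψ := ZMod.isPrimitive_stdAddChar (2 ^ (n - 1))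
  have hm : ((2 ^ (n - 1) : ℕ) : ℂ) ≠ 0 := by simp
  have hf' (t : ZMod (2 ^ (n - 1))) : f (ZMod.stdAddChar t) =
      circulantSymbol ZMod.stdAddChar (fun u => (a (inl (ofAdd u)) : ℂ)) t := by
    simp [hf, circulantSymbol_eq_sum_range, Mpow.X_pow]
  have hg' (t : ZMod (2 ^ (n - 1))) : g (ZMod.stdAddChar t) =
      circulantSymbol ZMod.stdAddChar (fun u => (a (inr (ofAdd 1) * inl (ofAdd u)) : ℂ)) t := by
    simp [hg, circulantSymbol_eq_sum_range, Mpow.X_pow, Mpow.Y]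
  have hroot (j : ℕ) : Complex.exp (2 * Real.pi * Complex.I * j / (2 : ℂ) ^ (n - 1)) =
      ZMod.stdAddChar (j : ZMod (2 ^ (n - 1))) := by
    rw [ZMod.stdAddChar_natCast]
    push_cast
    rfl
  have hpow (j : ℕ) : ZMod.stdAddChar (j : ZMod (2 ^ (n - 1))) ^ (2 ^ (n - 2) + 1 : ℕ) =
      ZMod.stdAddChar (mc n * (j : ZMod (2 ^ (n - 1)))) := by
    rw [← AddChar.map_nsmul_eq_pow, nsmul_eq_mul, mc]
    push_cast
    rfl
  refine (Int.cast_det _).trans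
    ((ZModSemidirectTwo.det_groupMatrix hψ hm fun g => (a g : ℂ)).trans ?_)
  rw [ZMod.prod_eq_prod_range]
  refine Finset.prod_congr rfl fun j _ => ?_
  rw [hroot, hpow, hf', hf', hg', hg']
end

section
/- For every integer m, the function a : SD₁₆ → ℤ defined by a(X⁰) = 1 + m, a(X^j) = m for 1 ≤ j ≤ 7, and a(Y·X^j) = m for 0 ≤ j ≤ 7 (i.e., the group-ring element (1 + m·h(X)) + Y·m·h(X) with h(x) = (x+1)(x²+1)(x⁴+1)) has integer group determinant D_{SD₁₆}(a) = 1 + 16m. -/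
open SemidirectProduct

/-- The semidihedral group of order 16, realized as `(ZMod 8) ⋊ (ZMod 2)` where the
nontrivial element of `ZMod 2` acts by multiplication by 3. -/
abbrev SD16 : Type :=
  Multiplicative (ZMod 8) ⋊[homOfOrderTwo (mulBy (3 : ZMod 8) (by decide))
    (mulBy_sq _ _)] Multiplicative (ZMod 2)

/-- The generator `X` of order 8 of `SD16`. -/
def SD16.X : SD16 := inl (Multiplicative.ofAdd 1)

/-- The generator `Y` of order 2 of `SD16`. -/
def SD16.Y : SD16 := inr (Multiplicative.ofAdd 1)

def myMat {α : Type} [CommRing α] {G : Type} [Fintype G] [DecidableEq G]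
    (u v : G → α) : Matrix G G α :=
  1 + Matrix.replicateCol Unit u * Matrix.replicateRow Unit v

lemma myMat_apply {α : Type} [CommRing α] {G : Type} [Fintype G] [DecidableEq G]
    (u v : G → α) (g h : G) :
    myMat u v g h = (if g = h then 1 else 0) + u g * v h := by
  show ((1 + Matrix.replicateCol Unit u * Matrix.replicateRow Unit v : Matrix G G α)) g h = _
  simp [Matrix.one_apply, Matrix.mul_apply]

lemma myMat_det_const {α : Type} [CommRing α] {G : Type} [Fintype G] [DecidableEq G]
    (c d : α) :
    (myMat (fun _ : G => c) (fun _ => d)).det = 1 + (Fintype.card G) • (d * c) := by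
  show Matrix.det (1 + Matrix.replicateCol Unit _ * Matrix.replicateRow Unit _) = _
  rw [Matrix.det_one_add_replicateCol_mul_replicateRow]
  congr 1
  simp only [dotProduct]
  rw [Finset.sum_const, Finset.card_univ]

lemma gen_det {G : Type} [Group G] [Fintype G] [DecidableEq G] (m : ℤ) (a : G → ℤ)
    (key : ∀ g : G, a g = (if g = 1 then 1 else 0) + m) :
    groupDet a = 1 + (Fintype.card G) • m := by
  have hM : (Matrix.of fun g h : G => a (g * h⁻¹)) = myMat (fun _ => m) (fun _ => 1) := by
    ext g h
    rw [myMat_apply]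
    simp only [Matrix.of_apply, key, mul_inv_eq_one, mul_one]
  rw [groupDet, hM, myMat_det_const, one_mul]

lemma sd16_card : Fintype.card SD16 = 16 := rfl

lemma sd16_cover : ∀ g : SD16, g ≠ 1 → (∃ j : Fin 8, j ≠ 0 ∧ g = SD16.X ^ (j : ℕ)) ∨
    (∃ j : Fin 8, g = SD16.Y * SD16.X ^ (j : ℕ)) := by decide

/-- the element `(1 + m·h(X)) + Y·m·h(X)` has group determinant
`1 + 16m`. -/
theorem sd16_det_one_plus_sixteen_m (m : ℤ) (a : SD16 → ℤ)
    (ha : ∀ j : Fin 8, a (SD16.X ^ (j : ℕ)) = if j = 0 then 1 + m else m)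
    (hb : ∀ j : Fin 8, a (SD16.Y * SD16.X ^ (j : ℕ)) = m) :
    groupDet a = 1 + 16 * m := by
  have key : ∀ g : SD16, a g = (if g = 1 then 1 else 0) + m := by
    intro g
    by_cases hg : g = 1
    · subst hg
      simpa using ha 0
    · rw [if_neg hg]
      rcases sd16_cover g hg with ⟨j, hj, rfl⟩ | ⟨j, rfl⟩
      · rw [ha j, if_neg hj]; ring
      · rw [hb j]; ring
  refine (gen_det m a key).trans ?_
  rw [sd16_card]
  ring
end

section
/- Let f(z) = Σ_{j=0}^{7} a_j z^j and g(z) = Σ_{j=0}^{7} b_j z^j with integer coefficients a_j, b_j, and let ω = exp(2πi/8). Suppose f(1) and f(−1) are odd, g(1) and g(−1) are even, and (g(1)² − g(−1)²)/4 is an odd integer. Then there exist odd integers U and V such that f(ω)·f(−ω̄) − g(ω)·g(−ω̄) = U + V·√2·i (where ω̄ is the complex conjugate of ω), and consequently the integer A₃ satisfying (A₃ : ℂ) = ( f(ω)f(ω³) − g(ω)g(ω³) )·( f(ω⁵)f(ω⁷) − g(ω⁵)g(ω⁷) ) equals U² + 2V² and satisfies A₃ ≡ 3 (mod 8). -/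
private lemma zmod2_of_odd' {n : ℤ} (h : Odd n) : (n : ZMod 2) = 1 := by
  obtain ⟨k, hk⟩ := h
  rw [hk]; push_cast
  rw [show ((2 : ZMod 2)) = 0 by decide]; ring

private lemma zmod2_of_even' {n : ℤ} (h : Even n) : (n : ZMod 2) = 0 := by
  obtain ⟨k, hk⟩ := h
  rw [hk]; push_cast
  rw [← two_mul, show ((2 : ZMod 2)) = 0 by decide]; ring

private lemma odd_of_zmod2' {n : ℤ} (h : (n : ZMod 2) = 1) : Odd n := by
  have h0 : ((n - 1 : ℤ) : ZMod 2) = 0 := by push_cast; rw [h]; ring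
  rw [ZMod.intCast_zmod_eq_zero_iff_dvd] at h0
  obtain ⟨k, hk⟩ := h0
  exact ⟨k, by omega⟩

private lemma zU_aux' (x0 x1 x2 x3 y0 y1 y2 y3 : ZMod 2) (hx : x0 + x1 + x2 + x3 = 1)
    (hy : y0 + y1 + y2 + y3 = 0) :
    x0 ^ 2 + x2 ^ 2 - x1 ^ 2 - x3 ^ 2 - (y0 ^ 2 + y2 ^ 2 - y1 ^ 2 - y3 ^ 2) = 1 := by
  revert hx hy; revert x0 x1 x2 x3 y0 y1 y2 y3; decide

private lemma zV_aux' (x0 x1 x2 x3 y0 y1 y2 y3 : ZMod 2) (hx : x0 + x1 + x2 + x3 = 1)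
    (hy1 : y0 + y2 = 1) (hy2 : y1 + y3 = 1) :
    x0 * x1 + x2 * x3 + x0 * x3 - x2 * x1 - (y0 * y1 + y2 * y3 + y0 * y3 - y2 * y1) = 1 := by
  revert hx hy1 hy2; revert x0 x1 x2 x3 y0 y1 y2 y3; decide

private lemma fv0 : ((0 : Fin 8) : ℕ) = 0 := rfl
private lemma fv1 : ((1 : Fin 8) : ℕ) = 1 := rfl
private lemma fv2 : ((2 : Fin 8) : ℕ) = 2 := rfl
private lemma fv3 : ((3 : Fin 8) : ℕ) = 3 := rfl
private lemma fv4 : ((4 : Fin 8) : ℕ) = 4 := rfl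
private lemma fv5 : ((5 : Fin 8) : ℕ) = 5 := rfl
private lemma fv6 : ((6 : Fin 8) : ℕ) = 6 := rfl
private lemma fv7 : ((7 : Fin 8) : ℕ) = 7 := rfl

set_option maxHeartbeats 1000000 in
/-- the factor `A₃` of the `SD16` determinant is of the form `U² + 2V²`
with `U`, `V` odd, hence `≡ 3 (mod 8)`. -/
theorem A3_three_mod_eight (a b : Fin 8 → ℤ) (f g : ℂ → ℂ) (ω : ℂ)
    (hω : ω = Complex.exp (2 * Real.pi * Complex.I / 8))
    (hf : ∀ z : ℂ, f z = ∑ j : Fin 8, (a j : ℂ) * z ^ (j : ℕ))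
    (hg : ∀ z : ℂ, g z = ∑ j : Fin 8, (b j : ℂ) * z ^ (j : ℕ))
    (hf1 : Odd (∑ j : Fin 8, a j))
    (hf2 : Odd (∑ j : Fin 8, a j * (-1) ^ (j : ℕ)))
    (hg1 : Even (∑ j : Fin 8, b j))
    (hg2 : Even (∑ j : Fin 8, b j * (-1) ^ (j : ℕ)))
    (hquot : ∃ t : ℤ, Odd t ∧
      (∑ j : Fin 8, b j) ^ 2 - (∑ j : Fin 8, b j * (-1) ^ (j : ℕ)) ^ 2 = 4 * t) :
    ∃ U V : ℤ, Odd U ∧ Odd V ∧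
      f ω * f (-(starRingEnd ℂ) ω) - g ω * g (-(starRingEnd ℂ) ω) =
        (U : ℂ) + (V : ℂ) * (Real.sqrt 2 : ℂ) * Complex.I ∧
      ∀ A₃ : ℤ,
        (A₃ : ℂ) = (f ω * f (ω ^ 3) - g ω * g (ω ^ 3)) *
          (f (ω ^ 5) * f (ω ^ 7) - g (ω ^ 5) * g (ω ^ 7)) →
        A₃ = U ^ 2 + 2 * V ^ 2 ∧ A₃ % 8 = 3 := by
  have h20 : (2 : ZMod 2) = 0 := by decide
  have h2 : (Real.sqrt 2 : ℂ) ^ 2 = 2 := by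
    norm_cast
    rw [Real.sq_sqrt] <;> norm_num
  have hωval : ω = (Real.sqrt 2 : ℂ) / 2 + (Real.sqrt 2 : ℂ) / 2 * Complex.I := by
    rw [hω, show (2 * (Real.pi : ℂ) * Complex.I / 8) = ((Real.pi / 4 : ℝ) : ℂ) * Complex.I by
      push_cast; ring]
    rw [Complex.exp_mul_I, ← Complex.ofReal_cos, ← Complex.ofReal_sin,
      Real.cos_pi_div_four, Real.sin_pi_div_four]
    push_cast; ring
  have hω2 : ω ^ 2 = Complex.I := by
    rw [hωval]
    linear_combination ((1/4 : ℂ) * Complex.I ^ 2 + (1/2 : ℂ) * Complex.I + (1/4 : ℂ)) * h2 + ((1/2 : ℂ)) * Complex.I_sq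
  have hω4 : ω ^ 4 = -1 := by
    linear_combination (ω ^ 2 + Complex.I) * hω2 + Complex.I_sq
  have hs2 : (Real.sqrt 2 : ℂ) * Complex.I = ω + ω ^ 3 := by
    rw [hωval]
    linear_combination ((-1/8 : ℂ) * (Real.sqrt 2 : ℂ) * Complex.I ^ 3 + (-3/8 : ℂ) * (Real.sqrt 2 : ℂ) * Complex.I ^ 2 + (-3/8 : ℂ) * (Real.sqrt 2 : ℂ) * Complex.I + (-1/8 : ℂ) * (Real.sqrt 2 : ℂ)) * h2 + ((-1/4 : ℂ) * (Real.sqrt 2 : ℂ) * Complex.I + (-3/4 : ℂ) * (Real.sqrt 2 : ℂ)) * Complex.I_sq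
  have hconj : -(starRingEnd ℂ) ω = ω ^ 3 := by
    rw [hωval]
    simp only [map_add, map_mul, map_div₀, Complex.conj_ofReal, Complex.conj_I, map_ofNat]
    linear_combination ((-1/8 : ℂ) * (Real.sqrt 2 : ℂ) * Complex.I ^ 3 + (-3/8 : ℂ) * (Real.sqrt 2 : ℂ) * Complex.I ^ 2 + (-3/8 : ℂ) * (Real.sqrt 2 : ℂ) * Complex.I + (-1/8 : ℂ) * (Real.sqrt 2 : ℂ)) * h2 + ((-1/4 : ℂ) * (Real.sqrt 2 : ℂ) * Complex.I + (-3/4 : ℂ) * (Real.sqrt 2 : ℂ)) * Complex.I_sq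
  have hfw : f (ω) = ((a 0 : ℂ) - (a 4 : ℂ)) + ((a 1 : ℂ) - (a 5 : ℂ)) * ω + ((a 2 : ℂ) - (a 6 : ℂ)) * ω ^ 2 + ((a 3 : ℂ) - (a 7 : ℂ)) * ω ^ 3 := by
    rw [hf, Fin.sum_univ_eight]
    simp only [fv0, fv1, fv2, fv3, fv4, fv5, fv6, fv7]
    linear_combination (ω ^ 3 * (a 7 : ℂ) + ω ^ 2 * (a 6 : ℂ) + ω * (a 5 : ℂ) + (a 4 : ℂ)) * hω4

  have hfw3 : f (ω ^ 3) = ((a 0 : ℂ) - (a 4 : ℂ)) + ((a 3 : ℂ) - (a 7 : ℂ)) * ω - ((a 2 : ℂ) - (a 6 : ℂ)) * ω ^ 2 + ((a 1 : ℂ) - (a 5 : ℂ)) * ω ^ 3 := by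
    rw [hf, Fin.sum_univ_eight]
    simp only [fv0, fv1, fv2, fv3, fv4, fv5, fv6, fv7]
    linear_combination (ω ^ 17 * (a 7 : ℂ) + ω ^ 14 * (a 6 : ℂ) + (-1 : ℂ) * ω ^ 13 * (a 7 : ℂ) + ω ^ 11 * (a 5 : ℂ) + (-1 : ℂ) * ω ^ 10 * (a 6 : ℂ) + ω ^ 9 * (a 7 : ℂ) + ω ^ 8 * (a 4 : ℂ) + (-1 : ℂ) * ω ^ 7 * (a 5 : ℂ) + ω ^ 6 * (a 6 : ℂ) + ω ^ 5 * (a 3 : ℂ) + (-1 : ℂ) * ω ^ 5 * (a 7 : ℂ) + (-1 : ℂ) * ω ^ 4 * (a 4 : ℂ) + ω ^ 3 * (a 5 : ℂ) + ω ^ 2 * (a 2 : ℂ) + (-1 : ℂ) * ω ^ 2 * (a 6 : ℂ) + (-1 : ℂ) * ω * (a 3 : ℂ) + ω * (a 7 : ℂ) + (a 4 : ℂ)) * hω4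

  have hfw5 : f (ω ^ 5) = ((a 0 : ℂ) - (a 4 : ℂ)) - ((a 1 : ℂ) - (a 5 : ℂ)) * ω + ((a 2 : ℂ) - (a 6 : ℂ)) * ω ^ 2 - ((a 3 : ℂ) - (a 7 : ℂ)) * ω ^ 3 := by
    rw [hf, Fin.sum_univ_eight]
    simp only [fv0, fv1, fv2, fv3, fv4, fv5, fv6, fv7]
    linear_combination (ω ^ 31 * (a 7 : ℂ) + (-1 : ℂ) * ω ^ 27 * (a 7 : ℂ) + ω ^ 26 * (a 6 : ℂ) + ω ^ 23 * (a 7 : ℂ) + (-1 : ℂ) * ω ^ 22 * (a 6 : ℂ) + ω ^ 21 * (a 5 : ℂ) + (-1 : ℂ) * ω ^ 19 * (a 7 : ℂ) + ω ^ 18 * (a 6 : ℂ) + (-1 : ℂ) * ω ^ 17 * (a 5 : ℂ) + ω ^ 16 * (a 4 : ℂ) + ω ^ 15 * (a 7 : ℂ) + (-1 : ℂ) * ω ^ 14 * (a 6 : ℂ) + ω ^ 13 * (a 5 : ℂ) + (-1 : ℂ) * ω ^ 12 * (a 4 : ℂ) + ω ^ 11 * (a 3 : ℂ) + (-1 : ℂ)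 * ω ^ 11 * (a 7 : ℂ) + ω ^ 10 * (a 6 : ℂ) + (-1 : ℂ) * ω ^ 9 * (a 5 : ℂ) + ω ^ 8 * (a 4 : ℂ) + (-1 : ℂ) * ω ^ 7 * (a 3 : ℂ) + ω ^ 7 * (a 7 : ℂ) + ω ^ 6 * (a 2 : ℂ) + (-1 : ℂ) * ω ^ 6 * (a 6 : ℂ) + ω ^ 5 * (a 5 : ℂ) + (-1 : ℂ) * ω ^ 4 * (a 4 : ℂ) + ω ^ 3 * (a 3 : ℂ) + (-1 : ℂ) * ω ^ 3 * (a 7 : ℂ) + (-1 : ℂ) * ω ^ 2 * (a 2 : ℂ) + ω ^ 2 * (a 6 : ℂ) + ω * (a 1 : ℂ) + (-1 : ℂ) * ω * (a 5 : ℂ) + (a 4 : ℂ)) * hω4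

  have hfw7 : f (ω ^ 7) = ((a 0 : ℂ) - (a 4 : ℂ)) - ((a 3 : ℂ) - (a 7 : ℂ)) * ω - ((a 2 : ℂ) - (a 6 : ℂ)) * ω ^ 2 - ((a 1 : ℂ) - (a 5 : ℂ)) * ω ^ 3 := by
    rw [hf, Fin.sum_univ_eight]
    simp only [fv0, fv1, fv2, fv3, fv4, fv5, fv6, fv7]
    linear_combination (ω ^ 45 * (a 7 : ℂ) + (-1 : ℂ) * ω ^ 41 * (a 7 : ℂ) + ω ^ 38 * (a 6 : ℂ) + ω ^ 37 * (a 7 : ℂ) + (-1 : ℂ) * ω ^ 34 * (a 6 : ℂ) + (-1 : ℂ) * ω ^ 33 * (a 7 : ℂ) + ω ^ 31 * (a 5 : ℂ) + ω ^ 30 * (a 6 : ℂ) + ω ^ 29 * (a 7 : ℂ) + (-1 : ℂ) * ω ^ 27 * (a 5 : ℂ) + (-1 : ℂ) * ω ^ 26 * (a 6 : ℂ) + (-1 : ℂ) * ω ^ 25 * (a 7 : ℂ) + ω ^ 24 * (a 4 : ℂ) + ω ^ 23 * (a 5 : ℂ) + ω ^ 22 * (a 6 : ℂ) + ω ^ 21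 * (a 7 : ℂ) + (-1 : ℂ) * ω ^ 20 * (a 4 : ℂ) + (-1 : ℂ) * ω ^ 19 * (a 5 : ℂ) + (-1 : ℂ) * ω ^ 18 * (a 6 : ℂ) + ω ^ 17 * (a 3 : ℂ) + (-1 : ℂ) * ω ^ 17 * (a 7 : ℂ) + ω ^ 16 * (a 4 : ℂ) + ω ^ 15 * (a 5 : ℂ) + ω ^ 14 * (a 6 : ℂ) + (-1 : ℂ) * ω ^ 13 * (a 3 : ℂ) + ω ^ 13 * (a 7 : ℂ) + (-1 : ℂ) * ω ^ 12 * (a 4 : ℂ) + (-1 : ℂ) * ω ^ 11 * (a 5 : ℂ) + ω ^ 10 * (a 2 : ℂ) + (-1 : ℂ) * ω ^ 10 * (a 6 : ℂ) + ω ^ 9 * (a 3 : ℂ) + (-1 : ℂ) * ω ^ 9 * (a 7 : ℂ) + ω ^ 8 * (a 4 : ℂ) + ω ^ 7 * (a 5 : ℂ) + (-1 : ℂ) * ω ^ 6 * (a 2 : ℂ) + ω ^ 6 * (a 6 : ℂ) + (-1 : ℂ) * ω ^ 5 * (a 3 : ℂ) + ω ^ 5 * (a 7 : ℂ) + (-1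 : ℂ) * ω ^ 4 * (a 4 : ℂ) + ω ^ 3 * (a 1 : ℂ) + (-1 : ℂ) * ω ^ 3 * (a 5 : ℂ) + ω ^ 2 * (a 2 : ℂ) + (-1 : ℂ) * ω ^ 2 * (a 6 : ℂ) + ω * (a 3 : ℂ) + (-1 : ℂ) * ω * (a 7 : ℂ) + (a 4 : ℂ)) * hω4

  have hgw : g (ω) = ((b 0 : ℂ) - (b 4 : ℂ)) + ((b 1 : ℂ) - (b 5 : ℂ)) * ω + ((b 2 : ℂ) - (b 6 : ℂ)) * ω ^ 2 + ((b 3 : ℂ) - (b 7 : ℂ)) * ω ^ 3 := by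
    rw [hg, Fin.sum_univ_eight]
    simp only [fv0, fv1, fv2, fv3, fv4, fv5, fv6, fv7]
    linear_combination (ω ^ 3 * (b 7 : ℂ) + ω ^ 2 * (b 6 : ℂ) + ω * (b 5 : ℂ) + (b 4 : ℂ)) * hω4

  have hgw3 : g (ω ^ 3) = ((b 0 : ℂ) - (b 4 : ℂ)) + ((b 3 : ℂ) - (b 7 : ℂ)) * ω - ((b 2 : ℂ) - (b 6 : ℂ)) * ω ^ 2 + ((b 1 : ℂ) - (b 5 : ℂ)) * ω ^ 3 := by
    rw [hg, Fin.sum_univ_eight]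
    simp only [fv0, fv1, fv2, fv3, fv4, fv5, fv6, fv7]
    linear_combination (ω ^ 17 * (b 7 : ℂ) + ω ^ 14 * (b 6 : ℂ) + (-1 : ℂ) * ω ^ 13 * (b 7 : ℂ) + ω ^ 11 * (b 5 : ℂ) + (-1 : ℂ) * ω ^ 10 * (b 6 : ℂ) + ω ^ 9 * (b 7 : ℂ) + ω ^ 8 * (b 4 : ℂ) + (-1 : ℂ) * ω ^ 7 * (b 5 : ℂ) + ω ^ 6 * (b 6 : ℂ) + ω ^ 5 * (b 3 : ℂ) + (-1 : ℂ) * ω ^ 5 * (b 7 : ℂ) + (-1 : ℂ) * ω ^ 4 * (b 4 : ℂ) + ω ^ 3 * (b 5 : ℂ) + ω ^ 2 * (b 2 : ℂ) + (-1 : ℂ) * ω ^ 2 * (b 6 : ℂ) + (-1 : ℂ) * ω * (b 3 : ℂ) + ω * (b 7 : ℂ) + (b 4 : ℂ)) * hω4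

  have hgw5 : g (ω ^ 5) = ((b 0 : ℂ) - (b 4 : ℂ)) - ((b 1 : ℂ) - (b 5 : ℂ)) * ω + ((b 2 : ℂ) - (b 6 : ℂ)) * ω ^ 2 - ((b 3 : ℂ) - (b 7 : ℂ)) * ω ^ 3 := by
    rw [hg, Fin.sum_univ_eight]
    simp only [fv0, fv1, fv2, fv3, fv4, fv5, fv6, fv7]
    linear_combination (ω ^ 31 * (b 7 : ℂ) + (-1 : ℂ) * ω ^ 27 * (b 7 : ℂ) + ω ^ 26 * (b 6 : ℂ) + ω ^ 23 * (b 7 : ℂ) + (-1 : ℂ) * ω ^ 22 * (b 6 : ℂ) + ω ^ 21 * (b 5 : ℂ) + (-1 : ℂ) * ω ^ 19 * (b 7 : ℂ) + ω ^ 18 * (b 6 : ℂ) + (-1 : ℂ) * ω ^ 17 * (b 5 : ℂ) + ω ^ 16 * (b 4 : ℂ) + ω ^ 15 * (b 7 : ℂ) + (-1 : ℂ) * ω ^ 14 * (b 6 : ℂ) + ω ^ 13 * (b 5 : ℂ) + (-1 : ℂ) * ω ^ 12 * (b 4 : ℂ) + ω ^ 11 * (b 3 : ℂ) + (-1 : ℂ)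 * ω ^ 11 * (b 7 : ℂ) + ω ^ 10 * (b 6 : ℂ) + (-1 : ℂ) * ω ^ 9 * (b 5 : ℂ) + ω ^ 8 * (b 4 : ℂ) + (-1 : ℂ) * ω ^ 7 * (b 3 : ℂ) + ω ^ 7 * (b 7 : ℂ) + ω ^ 6 * (b 2 : ℂ) + (-1 : ℂ) * ω ^ 6 * (b 6 : ℂ) + ω ^ 5 * (b 5 : ℂ) + (-1 : ℂ) * ω ^ 4 * (b 4 : ℂ) + ω ^ 3 * (b 3 : ℂ) + (-1 : ℂ) * ω ^ 3 * (b 7 : ℂ) + (-1 : ℂ) * ω ^ 2 * (b 2 : ℂ) + ω ^ 2 * (b 6 : ℂ) + ω * (b 1 : ℂ) + (-1 : ℂ) * ω * (b 5 : ℂ) + (b 4 : ℂ)) * hω4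

  have hgw7 : g (ω ^ 7) = ((b 0 : ℂ) - (b 4 : ℂ)) - ((b 3 : ℂ) - (b 7 : ℂ)) * ω - ((b 2 : ℂ) - (b 6 : ℂ)) * ω ^ 2 - ((b 1 : ℂ) - (b 5 : ℂ)) * ω ^ 3 := by
    rw [hg, Fin.sum_univ_eight]
    simp only [fv0, fv1, fv2, fv3, fv4, fv5, fv6, fv7]
    linear_combination (ω ^ 45 * (b 7 : ℂ) + (-1 : ℂ) * ω ^ 41 * (b 7 : ℂ) + ω ^ 38 * (b 6 : ℂ) + ω ^ 37 * (b 7 : ℂ) + (-1 : ℂ) * ω ^ 34 * (b 6 : ℂ) + (-1 : ℂ) * ω ^ 33 * (b 7 : ℂ) + ω ^ 31 * (b 5 : ℂ) + ω ^ 30 * (b 6 : ℂ) + ω ^ 29 * (b 7 : ℂ) + (-1 : ℂ) * ω ^ 27 * (b 5 : ℂ) + (-1 : ℂ) * ω ^ 26 * (b 6 : ℂ) + (-1 : ℂ) * ω ^ 25 * (b 7 : ℂ) + ω ^ 24 * (b 4 : ℂ) + ω ^ 23 * (b 5 : ℂ) + ω ^ 22 * (b 6 : ℂ) + ω ^ 21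 * (b 7 : ℂ) + (-1 : ℂ) * ω ^ 20 * (b 4 : ℂ) + (-1 : ℂ) * ω ^ 19 * (b 5 : ℂ) + (-1 : ℂ) * ω ^ 18 * (b 6 : ℂ) + ω ^ 17 * (b 3 : ℂ) + (-1 : ℂ) * ω ^ 17 * (b 7 : ℂ) + ω ^ 16 * (b 4 : ℂ) + ω ^ 15 * (b 5 : ℂ) + ω ^ 14 * (b 6 : ℂ) + (-1 : ℂ) * ω ^ 13 * (b 3 : ℂ) + ω ^ 13 * (b 7 : ℂ) + (-1 : ℂ) * ω ^ 12 * (b 4 : ℂ) + (-1 : ℂ) * ω ^ 11 * (b 5 : ℂ) + ω ^ 10 * (b 2 : ℂ) + (-1 : ℂ) * ω ^ 10 * (b 6 : ℂ) + ω ^ 9 * (b 3 : ℂ) + (-1 : ℂ) * ω ^ 9 * (b 7 : ℂ) + ω ^ 8 * (b 4 : ℂ) + ω ^ 7 * (b 5 : ℂ) + (-1 : ℂ) * ω ^ 6 * (b 2 : ℂ) + ω ^ 6 * (b 6 : ℂ) + (-1 : ℂ) * ω ^ 5 * (b 3 : ℂ) + ω ^ 5 * (b 7 : ℂ) + (-1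 : ℂ) * ω ^ 4 * (b 4 : ℂ) + ω ^ 3 * (b 1 : ℂ) + (-1 : ℂ) * ω ^ 3 * (b 5 : ℂ) + ω ^ 2 * (b 2 : ℂ) + (-1 : ℂ) * ω ^ 2 * (b 6 : ℂ) + ω * (b 3 : ℂ) + (-1 : ℂ) * ω * (b 7 : ℂ) + (b 4 : ℂ)) * hω4

  have hU : Odd ((a 0 - a 4) ^ 2 + (a 2 - a 6) ^ 2 - (a 1 - a 5) ^ 2 - (a 3 - a 7) ^ 2 - ((b 0 - b 4) ^ 2 + (b 2 - b 6) ^ 2 - (b 1 - b 5) ^ 2 - (b 3 - b 7) ^ 2)) := by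
    apply odd_of_zmod2'
    push_cast
    have hx : ((a 0 : ZMod 2) - (a 4 : ZMod 2)) + ((a 1 : ZMod 2) - (a 5 : ZMod 2))
        + ((a 2 : ZMod 2) - (a 6 : ZMod 2)) + ((a 3 : ZMod 2) - (a 7 : ZMod 2)) = 1 := by
      have h := zmod2_of_odd' hf1
      rw [Fin.sum_univ_eight] at h
      push_cast at h
      linear_combination h - ((a 4 : ZMod 2) + (a 5 : ZMod 2) + (a 6 : ZMod 2) + (a 7 : ZMod 2)) * h20
    have hy : ((b 0 : ZMod 2) - (b 4 : ZMod 2)) + ((b 1 : ZMod 2) - (b 5 : ZMod 2))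
        + ((b 2 : ZMod 2) - (b 6 : ZMod 2)) + ((b 3 : ZMod 2) - (b 7 : ZMod 2)) = 0 := by
      have h := zmod2_of_even' hg1
      rw [Fin.sum_univ_eight] at h
      push_cast at h
      linear_combination h - ((b 4 : ZMod 2) + (b 5 : ZMod 2) + (b 6 : ZMod 2) + (b 7 : ZMod 2)) * h20
    exact zU_aux' _ _ _ _ _ _ _ _ hx hy
  have hV : Odd ((a 0 - a 4) * (a 1 - a 5) + (a 2 - a 6) * (a 3 - a 7) + (a 0 - a 4) * (a 3 - a 7) - (a 2 - a 6) * (a 1 - a 5) - ((b 0 - b 4) * (b 1 - b 5) + (b 2 - b 6) * (b 3 - b 7) + (b 0 - b 4) * (b 3 - b 7) - (b 2 - b 6) * (b 1 - b 5))) := by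
    apply odd_of_zmod2'
    push_cast
    obtain ⟨t, ht, hteq⟩ := hquot
    rw [Fin.sum_univ_eight, Fin.sum_univ_eight] at hteq
    simp only [fv0, fv1, fv2, fv3, fv4, fv5, fv6, fv7] at hteq
    norm_num at hteq
    have h4 : 4 * ((b 0 + b 2 + b 4 + b 6) * (b 1 + b 3 + b 5 + b 7)) = 4 * t := by
      linear_combination hteq
    have hEO : (b 0 + b 2 + b 4 + b 6) * (b 1 + b 3 + b 5 + b 7) = t := by linarith
    have hE : Odd (b 0 + b 2 + b 4 + b 6) := (Int.odd_mul.mp (hEO ▸ ht)).1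
    have hO : Odd (b 1 + b 3 + b 5 + b 7) := (Int.odd_mul.mp (hEO ▸ ht)).2
    have hx : ((a 0 : ZMod 2) - (a 4 : ZMod 2)) + ((a 1 : ZMod 2) - (a 5 : ZMod 2))
        + ((a 2 : ZMod 2) - (a 6 : ZMod 2)) + ((a 3 : ZMod 2) - (a 7 : ZMod 2)) = 1 := by
      have h := zmod2_of_odd' hf1
      rw [Fin.sum_univ_eight] at h
      push_cast at h
      linear_combination h - ((a 4 : ZMod 2) + (a 5 : ZMod 2) + (a 6 : ZMod 2) + (a 7 : ZMod 2)) * h20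
    have hy1 : ((b 0 : ZMod 2) - (b 4 : ZMod 2)) + ((b 2 : ZMod 2) - (b 6 : ZMod 2)) = 1 := by
      have h := zmod2_of_odd' hE
      push_cast at h
      linear_combination h - ((b 4 : ZMod 2) + (b 6 : ZMod 2)) * h20
    have hy2 : ((b 1 : ZMod 2) - (b 5 : ZMod 2)) + ((b 3 : ZMod 2) - (b 7 : ZMod 2)) = 1 := by
      have h := zmod2_of_odd' hO
      push_cast at h
      linear_combination h - ((b 5 : ZMod 2) + (b 7 : ZMod 2)) * h20
    exact zV_aux' _ _ _ _ _ _ _ _ hx hy1 hy2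
  have e1 : f ω * f (ω ^ 3) - g ω * g (ω ^ 3) = (((a 0 : ℂ) - (a 4 : ℂ)) ^ 2 + ((a 2 : ℂ) - (a 6 : ℂ)) ^ 2 - ((a 1 : ℂ) - (a 5 : ℂ)) ^ 2 - ((a 3 : ℂ) - (a 7 : ℂ)) ^ 2 - (((b 0 : ℂ) - (b 4 : ℂ)) ^ 2 + ((b 2 : ℂ) - (b 6 : ℂ)) ^ 2 - ((b 1 : ℂ) - (b 5 : ℂ)) ^ 2 - ((b 3 : ℂ) - (b 7 : ℂ)) ^ 2)) + (((a 0 : ℂ) - (a 4 : ℂ)) * ((a 1 : ℂ) - (a 5 : ℂ)) + ((a 2 : ℂ) - (a 6 : ℂ)) * ((a 3 : ℂ) - (a 7 : ℂ)) + ((a 0 : ℂ) - (a 4 : ℂ)) * ((a 3 : ℂ) - (a 7 : ℂ)) - ((a 2 : ℂ) - (a 6 : ℂ)) * ((a 1 : ℂ) - (a 5 : ℂ)) - (((b 0 : ℂ) - (b 4 : ℂ)) * ((b 1 : ℂ) - (b 5 : ℂ)) + ((b 2 : ℂ) - (b 6 : ℂ)) * ((b 3 : ℂ) - (b 7 : ℂ))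 + ((b 0 : ℂ) - (b 4 : ℂ)) * ((b 3 : ℂ) - (b 7 : ℂ)) - ((b 2 : ℂ) - (b 6 : ℂ)) * ((b 1 : ℂ) - (b 5 : ℂ)))) * (ω + ω ^ 3) := by
    rw [hfw, hfw3, hgw, hgw3]
    linear_combination (ω ^ 2 * (a 1 : ℂ) * (a 3 : ℂ) + (-1 : ℂ) * ω ^ 2 * (a 1 : ℂ) * (a 7 : ℂ) + (-1 : ℂ) * ω ^ 2 * (a 3 : ℂ) * (a 5 : ℂ) + ω ^ 2 * (a 5 : ℂ) * (a 7 : ℂ) + (-1 : ℂ) * ω ^ 2 * (b 1 : ℂ) * (b 3 : ℂ) + ω ^ 2 * (b 1 : ℂ) * (b 7 : ℂ) + ω ^ 2 * (b 3 : ℂ) * (b 5 : ℂ) + (-1 : ℂ) * ω ^ 2 * (b 5 : ℂ) * (b 7 : ℂ) + ω * (a 1 : ℂ) * (a 2 : ℂ) + (-1 : ℂ) * ω * (a 1 : ℂ) * (a 6 : ℂ) + (-1 : ℂ) * ω * (a 2 : ℂ) * (a 3 : ℂ) + (-1 : ℂ) * ω * (a 2 : ℂ) * (a 5 : ℂ)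 + ω * (a 2 : ℂ) * (a 7 : ℂ) + ω * (a 3 : ℂ) * (a 6 : ℂ) + ω * (a 5 : ℂ) * (a 6 : ℂ) + (-1 : ℂ) * ω * (a 6 : ℂ) * (a 7 : ℂ) + (-1 : ℂ) * ω * (b 1 : ℂ) * (b 2 : ℂ) + ω * (b 1 : ℂ) * (b 6 : ℂ) + ω * (b 2 : ℂ) * (b 3 : ℂ) + ω * (b 2 : ℂ) * (b 5 : ℂ) + (-1 : ℂ) * ω * (b 2 : ℂ) * (b 7 : ℂ) + (-1 : ℂ) * ω * (b 3 : ℂ) * (b 6 : ℂ) + (-1 : ℂ) * ω * (b 5 : ℂ) * (b 6 : ℂ) + ω * (b 6 : ℂ) * (b 7 : ℂ) + (a 1 : ℂ) ^ 2 + (-2 : ℂ) * (a 1 : ℂ) * (a 5 : ℂ) + (-1 : ℂ) * (a 2 : ℂ) ^ 2 + (2 : ℂ) * (a 2 : ℂ) * (a 6 : ℂ) + (a 3 : ℂ) ^ 2 + (-2 : ℂ) * (a 3 : ℂ) * (a 7 : ℂ) + (a 5 : ℂ) ^ 2 + (-1 : ℂ) * (a 6 : ℂ) ^ 2 + (a 7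 : ℂ) ^ 2 + (-1 : ℂ) * (b 1 : ℂ) ^ 2 + (2 : ℂ) * (b 1 : ℂ) * (b 5 : ℂ) + (b 2 : ℂ) ^ 2 + (-2 : ℂ) * (b 2 : ℂ) * (b 6 : ℂ) + (-1 : ℂ) * (b 3 : ℂ) ^ 2 + (2 : ℂ) * (b 3 : ℂ) * (b 7 : ℂ) + (-1 : ℂ) * (b 5 : ℂ) ^ 2 + (b 6 : ℂ) ^ 2 + (-1 : ℂ) * (b 7 : ℂ) ^ 2) * hω4
  have e2 : f (ω ^ 5) * f (ω ^ 7) - g (ω ^ 5) * g (ω ^ 7) =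
      (((a 0 : ℂ) - (a 4 : ℂ)) ^ 2 + ((a 2 : ℂ) - (a 6 : ℂ)) ^ 2 - ((a 1 : ℂ) - (a 5 : ℂ)) ^ 2 - ((a 3 : ℂ) - (a 7 : ℂ)) ^ 2 - (((b 0 : ℂ) - (b 4 : ℂ)) ^ 2 + ((b 2 : ℂ) - (b 6 : ℂ)) ^ 2 - ((b 1 : ℂ) - (b 5 : ℂ)) ^ 2 - ((b 3 : ℂ) - (b 7 : ℂ)) ^ 2)) - (((a 0 : ℂ) - (a 4 : ℂ)) * ((a 1 : ℂ) - (a 5 : ℂ)) + ((a 2 : ℂ) - (a 6 : ℂ)) * ((a 3 : ℂ) - (a 7 : ℂ)) + ((a 0 : ℂ) - (a 4 : ℂ)) * ((a 3 : ℂ) - (a 7 : ℂ)) - ((a 2 : ℂ) - (a 6 : ℂ)) * ((a 1 : ℂ) - (a 5 : ℂ)) - (((b 0 : ℂ) - (b 4 : ℂ)) * ((b 1 : ℂ) - (b 5 : ℂ)) + ((b 2 : ℂ) - (b 6 : ℂ)) * ((b 3 : ℂ) - (b 7 : ℂ)) + ((b 0 : ℂ) - (b 4 : ℂ)) * ((b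 3 : ℂ) - (b 7 : ℂ)) - ((b 2 : ℂ) - (b 6 : ℂ)) * ((b 1 : ℂ) - (b 5 : ℂ)))) * (ω + ω ^ 3) := by
    rw [hfw5, hfw7, hgw5, hgw7]
    linear_combination (ω ^ 2 * (a 1 : ℂ) * (a 3 : ℂ) + (-1 : ℂ) * ω ^ 2 * (a 1 : ℂ) * (a 7 : ℂ) + (-1 : ℂ) * ω ^ 2 * (a 3 : ℂ) * (a 5 : ℂ) + ω ^ 2 * (a 5 : ℂ) * (a 7 : ℂ) + (-1 : ℂ) * ω ^ 2 * (b 1 : ℂ) * (b 3 : ℂ) + ω ^ 2 * (b 1 : ℂ) * (b 7 : ℂ) + ω ^ 2 * (b 3 : ℂ) * (b 5 : ℂ) + (-1 : ℂ) * ω ^ 2 * (b 5 : ℂ) * (b 7 : ℂ) + (-1 : ℂ) * ω * (a 1 : ℂ) * (a 2 : ℂ) + ω * (a 1 : ℂ) * (a 6 : ℂ) + ω * (a 2 : ℂ) * (a 3 : ℂ) + ω * (a 2 : ℂ) * (a 5 : ℂ) + (-1 : ℂ) * ω * (a 2 : ℂ) * (a 7 : ℂ) + (-1 : ℂ) * ω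 * (a 3 : ℂ) * (a 6 : ℂ) + (-1 : ℂ) * ω * (a 5 : ℂ) * (a 6 : ℂ) + ω * (a 6 : ℂ) * (a 7 : ℂ) + ω * (b 1 : ℂ) * (b 2 : ℂ) + (-1 : ℂ) * ω * (b 1 : ℂ) * (b 6 : ℂ) + (-1 : ℂ) * ω * (b 2 : ℂ) * (b 3 : ℂ) + (-1 : ℂ) * ω * (b 2 : ℂ) * (b 5 : ℂ) + ω * (b 2 : ℂ) * (b 7 : ℂ) + ω * (b 3 : ℂ) * (b 6 : ℂ) + ω * (b 5 : ℂ) * (b 6 : ℂ) + (-1 : ℂ) * ω * (b 6 : ℂ) * (b 7 : ℂ) + (a 1 : ℂ) ^ 2 + (-2 : ℂ) * (a 1 : ℂ) * (a 5 : ℂ) + (-1 : ℂ) * (a 2 : ℂ) ^ 2 + (2 : ℂ) * (a 2 : ℂ) * (a 6 : ℂ) + (a 3 : ℂ) ^ 2 + (-2 : ℂ) * (a 3 : ℂ) * (a 7 : ℂ) + (a 5 : ℂ) ^ 2 + (-1 : ℂ) * (a 6 : ℂ) ^ 2 + (a 7 : ℂ) ^ 2 + (-1 : ℂ) * (b 1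 : ℂ) ^ 2 + (2 : ℂ) * (b 1 : ℂ) * (b 5 : ℂ) + (b 2 : ℂ) ^ 2 + (-2 : ℂ) * (b 2 : ℂ) * (b 6 : ℂ) + (-1 : ℂ) * (b 3 : ℂ) ^ 2 + (2 : ℂ) * (b 3 : ℂ) * (b 7 : ℂ) + (-1 : ℂ) * (b 5 : ℂ) ^ 2 + (b 6 : ℂ) ^ 2 + (-1 : ℂ) * (b 7 : ℂ) ^ 2) * hω4
  refine ⟨(a 0 - a 4) ^ 2 + (a 2 - a 6) ^ 2 - (a 1 - a 5) ^ 2 - (a 3 - a 7) ^ 2 - ((b 0 - b 4) ^ 2 + (b 2 - b 6) ^ 2 - (b 1 - b 5) ^ 2 - (b 3 - b 7) ^ 2), (a 0 - a 4) * (a 1 - a 5) + (a 2 - a 6) * (a 3 - a 7) + (a 0 - a 4) * (a 3 - a 7) - (a 2 - a 6) * (a 1 - a 5) - ((b 0 - b 4) * (b 1 - b 5) + (b 2 - b 6) * (b 3 - b 7) + (b 0 - b 4) * (b 3 - b 7) - (b 2 - b 6) * (b 1 - b 5)), hU, hV, ?_, ?_⟩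
  · rw [hconj, e1]
    push_cast
    linear_combination (((-1 : ℂ) * (a 0 : ℂ) * (a 1 : ℂ) + (-1 : ℂ) * (a 0 : ℂ) * (a 3 : ℂ) + (a 0 : ℂ) * (a 5 : ℂ) + (a 0 : ℂ) * (a 7 : ℂ) + (a 1 : ℂ) * (a 2 : ℂ) + (a 1 : ℂ) * (a 4 : ℂ) + (-1 : ℂ) * (a 1 : ℂ) * (a 6 : ℂ) + (-1 : ℂ) * (a 2 : ℂ) * (a 3 : ℂ) + (-1 : ℂ) * (a 2 : ℂ) * (a 5 : ℂ) + (a 2 : ℂ) * (a 7 : ℂ) + (a 3 : ℂ) * (a 4 : ℂ) + (a 3 : ℂ) * (a 6 : ℂ) + (-1 : ℂ) * (a 4 : ℂ) * (a 5 : ℂ) + (-1 : ℂ) * (a 4 : ℂ) * (a 7 : ℂ) + (a 5 : ℂ) * (a 6 : ℂ) + (-1 : ℂ) * (a 6 : ℂ) * (a 7 : ℂ) + (b 0 : ℂ) * (b 1 : ℂ) + (b 0 : ℂ) * (b 3 : ℂ) + (-1 : ℂ) * (b 0 : ℂ) * (b 5 : ℂ) + (-1 : ℂ) * (b 0 : ℂ)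 * (b 7 : ℂ) + (-1 : ℂ) * (b 1 : ℂ) * (b 2 : ℂ) + (-1 : ℂ) * (b 1 : ℂ) * (b 4 : ℂ) + (b 1 : ℂ) * (b 6 : ℂ) + (b 2 : ℂ) * (b 3 : ℂ) + (b 2 : ℂ) * (b 5 : ℂ) + (-1 : ℂ) * (b 2 : ℂ) * (b 7 : ℂ) + (-1 : ℂ) * (b 3 : ℂ) * (b 4 : ℂ) + (-1 : ℂ) * (b 3 : ℂ) * (b 6 : ℂ) + (b 4 : ℂ) * (b 5 : ℂ) + (b 4 : ℂ) * (b 7 : ℂ) + (-1 : ℂ) * (b 5 : ℂ) * (b 6 : ℂ) + (b 6 : ℂ) * (b 7 : ℂ))) * hs2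
  · intro A₃ hA
    rw [e1, e2] at hA
    have hAeq : A₃ = ((a 0 - a 4) ^ 2 + (a 2 - a 6) ^ 2 - (a 1 - a 5) ^ 2 - (a 3 - a 7) ^ 2 - ((b 0 - b 4) ^ 2 + (b 2 - b 6) ^ 2 - (b 1 - b 5) ^ 2 - (b 3 - b 7) ^ 2)) ^ 2 + 2 * ((a 0 - a 4) * (a 1 - a 5) + (a 2 - a 6) * (a 3 - a 7) + (a 0 - a 4) * (a 3 - a 7) - (a 2 - a 6) * (a 1 - a 5) - ((b 0 - b 4) * (b 1 - b 5) + (b 2 - b 6) * (b 3 - b 7) + (b 0 - b 4) * (b 3 - b 7) - (b 2 - b 6) * (b 1 - b 5))) ^ 2 := by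
      have hc : (A₃ : ℂ) = ((((a 0 - a 4) ^ 2 + (a 2 - a 6) ^ 2 - (a 1 - a 5) ^ 2 - (a 3 - a 7) ^ 2 - ((b 0 - b 4) ^ 2 + (b 2 - b 6) ^ 2 - (b 1 - b 5) ^ 2 - (b 3 - b 7) ^ 2)) ^ 2 + 2 * ((a 0 - a 4) * (a 1 - a 5) + (a 2 - a 6) * (a 3 - a 7) + (a 0 - a 4) * (a 3 - a 7) - (a 2 - a 6) * (a 1 - a 5) - ((b 0 - b 4) * (b 1 - b 5) + (b 2 - b 6) * (b 3 - b 7) + (b 0 - b 4) * (b 3 - b 7) - (b 2 - b 6) * (b 1 - b 5))) ^ 2 : ℤ) : ℂ) := by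
        rw [hA]
        push_cast
        linear_combination (-((((a 0 : ℂ) - (a 4 : ℂ)) * ((a 1 : ℂ) - (a 5 : ℂ)) + ((a 2 : ℂ) - (a 6 : ℂ)) * ((a 3 : ℂ) - (a 7 : ℂ)) + ((a 0 : ℂ) - (a 4 : ℂ)) * ((a 3 : ℂ) - (a 7 : ℂ)) - ((a 2 : ℂ) - (a 6 : ℂ)) * ((a 1 : ℂ) - (a 5 : ℂ)) - (((b 0 : ℂ) - (b 4 : ℂ)) * ((b 1 : ℂ) - (b 5 : ℂ)) + ((b 2 : ℂ) - (b 6 : ℂ)) * ((b 3 : ℂ) - (b 7 : ℂ)) + ((b 0 : ℂ) - (b 4 : ℂ)) * ((b 3 : ℂ) - (b 7 : ℂ)) - ((b 2 : ℂ) - (b 6 : ℂ)) * ((b 1 : ℂ) - (b 5 : ℂ))))) ^ 2 * (ω ^ 2 + 2)) * hω4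
      exact_mod_cast hc
    refine ⟨hAeq, ?_⟩
    obtain ⟨u, hu⟩ := hU
    obtain ⟨v, hv⟩ := hV
    obtain ⟨w, hw⟩ := Int.even_mul_succ_self u
    have hk : ∃ k : ℤ, A₃ = 8 * k + 3 := ⟨w + v ^ 2 + v, by rw [hAeq, hu, hv]; linear_combination 4 * hw⟩
    obtain ⟨k, hk⟩ := hk
    omega
end
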